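/- For states x, y of a skip-free automaton (X, h), x and y are bisimilar in (X,h) if and only if they are bisimilar in the labelled transition system grph_*(X,h). -/
import Mathlib


variable {At : Type} {Act : Type} {X : Type} {Y : Type} {Z : Type}

/-- A skip-free automaton structure on `X`. -/
abbrev SFA (At Act X : Type) := X → At → Option (Act × Option X)

/-- Acceptance of a guarded trace (a nonempty list of atom/action pairs) from a state. -/
inductive Accepts (h : SFA At Act X) : X → List (At × Act) → Prop
  | last {x α p} : h x α = some (p, none) → Accepts h x [(α, p)]
  | step {x α p x' w} : h x α = some (p, some x') → Accepts h x' w →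
      Accepts h x ((α, p) :: w)

/-- The language of guarded traces accepted by a state of a skip-free automaton. -/
def Lang (h : SFA At Act X) (x : X) : Set (List (At × Act)) := {w | Accepts h x w}

/-- Bisimulations between skip-free automata. -/
def IsSFBisim (h : SFA At Act X) (k : SFA At Act Y) (R : X → Y → Prop) : Prop :=
  ∀ ⦃x y⦄, R x y → ∀ α : At,
    (h x α = none ↔ k y α = none) ∧
    (∀ p : Act, h x α = some (p, none) ↔ k y α = some (p, none)) ∧
    (∀ (p : Act) (x' : X), h x α = some (p, some x') →
      ∃ y' : Y, k y α = some (p, some y') ∧ R x' y')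

/-- Bisimilarity of states of skip-free automata. -/
def SFBisimilar (h : SFA At Act X) (k : SFA At Act Y) (x : X) (y : Y) : Prop :=
  ∃ R, IsSFBisim h k R ∧ R x y

/-- A labelled transition system over labels `At × Act` with termination `✓` (`none`). -/
abbrev LTS (At Act X : Type) := X → Set ((At × Act) × Option X)

/-- Bisimulations between labelled transition systems. -/
def IsLTSBisim (t : LTS At Act X) (u : LTS At Act Y) (R : X → Y → Prop) : Prop :=
  ∀ ⦃x y⦄, R x y → ∀ a : At × Act,
    ((a, (none : Option X)) ∈ t x ↔ (a, (none : Option Y)) ∈ u y) ∧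
    (∀ x' : X, (a, some x') ∈ t x → ∃ y' : Y, (a, some y') ∈ u y ∧ R x' y') ∧
    (∀ y' : Y, (a, some y') ∈ u y → ∃ x' : X, (a, some x') ∈ t x ∧ R x' y')

/-- Bisimilarity of states of labelled transition systems. -/
def LTSBisimilar (t : LTS At Act X) (u : LTS At Act Y) (x : X) (y : Y) : Prop :=
  ∃ R, IsLTSBisim t u R ∧ R x y

/-- The transformation of a skip-free automaton into a labelled transition system. -/
def grph (h : SFA At Act X) : LTS At Act X :=
  fun x => {z | h x z.1.1 = some (z.1.2, z.2)}

/-- A set of labelled transitions is graph-like if it assigns at most one outcome per atom. -/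
def GraphLike (U : Set ((At × Act) × Option X)) : Prop :=
  ∀ (α : At) (p q : Act) (ξ ζ : Option X),
    ((α, p), ξ) ∈ U → ((α, q), ζ) ∈ U → p = q ∧ ξ = ζ

/-- bisimilarity in a skip-free automaton coincides with bisimilarity in
the associated labelled transition system `grph_*(X,h)`. -/
theorem sfbisim_iff_ltsbisim (h : SFA At Act X) (x y : X) :
    SFBisimilar h h x y ↔ LTSBisimilar (grph h) (grph h) x y := by
  constructor
  · rintro ⟨R, hR, hxy⟩
    refine ⟨R, ?_, hxy⟩
    intro x y rxy a
    obtain ⟨α, p⟩ := a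
    obtain ⟨h1, h2, h3⟩ := hR rxy α
    refine ⟨?_, ?_, ?_⟩
    · simpa [grph] using h2 p
    · intro x' hx'
      simp only [grph, Set.mem_setOf_eq] at hx' ⊢
      exact h3 p x' hx'
    · intro y' hy'
      simp only [grph, Set.mem_setOf_eq] at hy' ⊢
      cases hhx : h x α with
      | none => exact absurd (h1.mp hhx) (by simp [hy'])
      | some v =>
        obtain ⟨q, ξ⟩ := v
        cases ξ with
        | none =>
          have := (h2 q).mp hhx
          rw [this] at hy'; cases hy'
        | some x' =>
          obtain ⟨y'', hy'', rxy'⟩ := h3 q x' hhx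
          rw [hy''] at hy'
          cases hy'
          exact ⟨x', rfl, rxy'⟩
  · rintro ⟨R, hR, hxy⟩
    refine ⟨R, ?_, hxy⟩
    intro x y rxy α
    refine ⟨?_, ?_, ?_⟩
    · constructor
      · intro hx
        by_contra hy
        obtain ⟨⟨q, ξ⟩, hq⟩ := Option.ne_none_iff_exists'.mp hy
        obtain ⟨h1, h2, h3⟩ := hR rxy (α, q)
        cases ξ with
        | none =>
          have : ((α,q), (none : Option X)) ∈ grph h x := h1.mpr (by simp [grph, hq])
          simp [grph, hx] at this
        | some y' =>
          obtain ⟨x', hx', _⟩ := h3 y' (by simp [grph, hq])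
          simp [grph, hx] at hx'
      · intro hy
        by_contra hx
        obtain ⟨⟨q, ξ⟩, hq⟩ := Option.ne_none_iff_exists'.mp hx
        obtain ⟨h1, h2, h3⟩ := hR rxy (α, q)
        cases ξ with
        | none =>
          have : ((α,q), (none : Option X)) ∈ grph h y := h1.mp (by simp [grph, hq])
          simp [grph, hy] at this
        | some x' =>
          obtain ⟨y', hy', _⟩ := h2 x' (by simp [grph, hq])
          simp [grph, hy] at hy'
    · intro p
      have := (hR rxy (α, p)).1
      simpa [grph] using this
    · intro p x' hx'
      obtain ⟨_, h2, _⟩ := hR rxy (α, p)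
      obtain ⟨y', hy', r⟩ := h2 x' (by simp [grph, hx'])
      exact ⟨y', by simpa [grph] using hy', r⟩
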